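/- For all integers 3 ≤ n ≤ m, γ_{2t}(K_n □ K_n) ≤ γ_{2t}(K_n □ K_m) ≤ min{2n, γ_{2t}(K_n □ K_n) + (m − n)}. -/

import Mathlib

open SimpleGraph

/-- `S` is a total 2-dominating set of `G`: every vertex has at least 2 neighbors in `S`. -/
def TotalTwoDom {V : Type*} (G : SimpleGraph V) (S : Set V) : Prop :=
  ∀ v : V, 2 ≤ (S ∩ {u | G.Adj v u}).ncard

/-- The total 2-domination number of `G`. -/
noncomputable def gamma2t {V : Type*} [Fintype V] (G : SimpleGraph V) : ℕ :=
  sInf {k | ∃ S : Set V, TotalTwoDom G S ∧ S.ncard = k}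

/-- The complete graph on `n` vertices. -/
def K (n : ℕ) : SimpleGraph (Fin n) := ⊤

/-!
Two full columns form a total 2-dominating set of size `2n`. For monotonicity in `m`, take an
optimal set `S` for `K_n □ K_{m+1}`: if every column holds two of its vertices then
`|S| ≥ 2(m+1) ≥ 2n`; otherwise some column holds at most one vertex `e` of `S`, whose two
`S`-neighbours then lie in its row, and moving `e` to a third column of that row frees its column,
which can then be deleted. For the second bound, an optimal set for `K_n □ K_n` of size `< 2n`
meets every row and every column, hence has two vertices in some row `r`; adding row `r` of the
`m - n` new columns gives a total 2-dominating set of `K_n □ K_m`.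
-/

lemma two_le_ncard_of_ne {α : Type*} [Finite α] {s : Set α} {a b : α} (ha : a ∈ s) (hb : b ∈ s)
    (hab : a ≠ b) : 2 ≤ s.ncard :=
  (Set.one_lt_ncard_iff s.toFinite).2 ⟨a, b, ha, hb, hab⟩

lemma exists_ne_of_two_le_ncard {α : Type*} [Finite α] {s : Set α} (h : 2 ≤ s.ncard) :
    ∃ a ∈ s, ∃ b ∈ s, a ≠ b := by
  obtain ⟨a, b, ha, hb, hab⟩ := (Set.one_lt_ncard_iff s.toFinite).1 h
  exact ⟨a, ha, b, hb, hab⟩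

lemma ncard_eq_sum_ncard_fiber {α β : Type*} [Fintype α] [Fintype β] [DecidableEq β]
    (S : Set α) (f : α → β) : S.ncard = ∑ b, (S ∩ f ⁻¹' {b}).ncard := by
  classical
  rw [Set.ncard_eq_toFinset_card',
    Finset.card_eq_sum_card_fiberwise fun x _ => Finset.mem_univ (f x)]
  refine Finset.sum_congr rfl fun b _ => ?_
  rw [Set.ncard_eq_toFinset_card']
  congr 1
  ext x
  simp

lemma card_mul_le_ncard_of_le_ncard_fiber {α β : Type*} [Fintype α] [Fintype β] {S : Set α}
    (f : α → β) {k : ℕ} (h : ∀ b, k ≤ (S ∩ f ⁻¹' {b}).ncard) : Fintype.card β * k ≤ S.ncard := by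
  classical
  rw [ncard_eq_sum_ncard_fiber S f, ← smul_eq_mul, ← Finset.card_univ]
  exact Finset.card_nsmul_le_sum _ _ _ fun b _ => h b

lemma ncard_le_card_mul_of_ncard_fiber_le {α β : Type*} [Fintype α] [Fintype β] {S : Set α}
    (f : α → β) {k : ℕ} (h : ∀ b, (S ∩ f ⁻¹' {b}).ncard ≤ k) : S.ncard ≤ Fintype.card β * k := by
  classical
  rw [ncard_eq_sum_ncard_fiber S f, ← smul_eq_mul, ← Finset.card_univ]
  exact Finset.sum_le_card_nsmul _ _ _ fun b _ => h b

section TotalTwoDom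

variable {V W : Type*} {G : SimpleGraph V} {H : SimpleGraph W}

lemma gamma2t_le_ncard [Fintype V] {S : Set V} (hS : TotalTwoDom G S) : gamma2t G ≤ S.ncard :=
  Nat.sInf_le ⟨S, hS, rfl⟩

lemma exists_totalTwoDom_ncard_eq_gamma2t [Fintype V] {S : Set V} (hS : TotalTwoDom G S) :
    ∃ T, TotalTwoDom G T ∧ T.ncard = gamma2t G :=
  Nat.sInf_mem (s := {k | ∃ S : Set V, TotalTwoDom G S ∧ S.ncard = k}) ⟨S.ncard, S, hS, rfl⟩

lemma ncard_neighbors_le_image [Finite W] (f : G ↪g H) (S : Set V) (v : V) :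
    (S ∩ {u | G.Adj v u}).ncard ≤ (f '' S ∩ {u | H.Adj (f v) u}).ncard := by
  rw [← Set.ncard_image_of_injective _ f.injective]
  refine Set.ncard_le_ncard ?_ (Set.toFinite _)
  rintro _ ⟨u, ⟨huS, huv⟩, rfl⟩
  exact ⟨⟨u, huS, rfl⟩, f.map_adj_iff.2 huv⟩

lemma totalTwoDom_preimage (f : G ↪g H) {S : Set W} (hS : S ⊆ Set.range f)
    (h : ∀ v, 2 ≤ (S ∩ {u | H.Adj (f v) u}).ncard) : TotalTwoDom G (f ⁻¹' S) := by
  intro v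
  have himage : f '' (f ⁻¹' S ∩ {u | G.Adj v u}) = S ∩ {u | H.Adj (f v) u} := by
    ext w
    constructor
    · rintro ⟨u, ⟨huS, huv⟩, rfl⟩
      exact ⟨huS, f.map_adj_iff.2 huv⟩
    · rintro ⟨hwS, hvw⟩
      obtain ⟨u, rfl⟩ := hS hwS
      exact ⟨u, ⟨hwS, f.map_adj_iff.1 hvw⟩, rfl⟩
  rw [← Set.ncard_image_of_injective _ f.injective, himage]
  exact h v

end TotalTwoDom

def SimpleGraph.Embedding.boxProdMapRight {α β γ : Type*} (G : SimpleGraph α)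
    {H : SimpleGraph β} {H' : SimpleGraph γ} (f : H ↪g H') : G.boxProd H ↪g G.boxProd H' where
  toFun := Prod.map id f
  inj' := Function.injective_id.prodMap f.injective
  map_rel_iff' := by
    rintro ⟨a₁, b₁⟩ ⟨a₂, b₂⟩
    simp [boxProd_adj, f.injective.eq_iff]

section Grid

variable {n m : ℕ}

@[simp]
lemma K_adj {a b : Fin n} : (K n).Adj a b ↔ a ≠ b := Iff.rfl

lemma boxProd_K_adj {v u : Fin n × Fin m} :
    (K n □ K m).Adj v u ↔ (v.1 ≠ u.1 ∧ v.2 = u.2) ∨ (v.2 ≠ u.2 ∧ v.1 = u.1) := by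
  simp [K, boxProd_adj, and_comm]

def columnEmbedding (n : ℕ) {m m' : ℕ} (f : Fin m ↪ Fin m') : (K n □ K m) ↪g (K n □ K m') :=
  (Embedding.completeGraph f).boxProdMapRight (K n)

@[simp]
lemma columnEmbedding_apply {m' : ℕ} (f : Fin m ↪ Fin m') (p : Fin n × Fin m) :
    columnEmbedding n f p = (p.1, f p.2) := rfl

lemma totalTwoDom_twoColumns (hn : 2 ≤ n) {c₀ c₁ : Fin m} (hc : c₀ ≠ c₁) :
    TotalTwoDom (K n □ K m) (Prod.snd ⁻¹' {c₀, c₁}) := by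
  have : Nontrivial (Fin n) := Fin.nontrivial_iff_two_le.2 hn
  rintro ⟨i, j⟩
  obtain ⟨i', hi'⟩ := exists_ne i
  by_cases hj : j = c₀ ∨ j = c₁
  · obtain ⟨c, hc, hcj⟩ : ∃ c, (c = c₀ ∨ c = c₁) ∧ c ≠ j := by
      rcases hj with rfl | rfl
      exacts [⟨c₁, Or.inr rfl, hc.symm⟩, ⟨c₀, Or.inl rfl, hc⟩]
    refine two_le_ncard_of_ne (a := (i, c)) (b := (i', j)) ⟨hc, ?_⟩ ⟨hj, ?_⟩ (by simp [hi'.symm])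
      <;> simp [hcj.symm, hi'.symm]
  · push Not at hj
    refine two_le_ncard_of_ne (a := (i, c₀)) (b := (i, c₁)) ⟨Or.inl rfl, ?_⟩ ⟨Or.inr rfl, ?_⟩
      (by simp [hc]) <;> simp [hj.1, hj.2]

lemma gamma2t_le_two_mul (hn : 2 ≤ n) (hm : 2 ≤ m) : gamma2t (K n □ K m) ≤ 2 * n := by
  have hc : (⟨0, by omega⟩ : Fin m) ≠ ⟨1, by omega⟩ := by simp
  refine (gamma2t_le_ncard (totalTwoDom_twoColumns hn hc)).trans_eq ?_
  rw [← Set.univ_prod, Set.ncard_prod, Set.ncard_univ, Nat.card_eq_fintype_card, Fintype.card_fin,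
    Set.ncard_pair hc, mul_comm]

lemma exists_totalTwoDom_ncard_eq_gamma2t_boxProd_K (hn : 2 ≤ n) (hm : 2 ≤ m) :
    ∃ S, TotalTwoDom (K n □ K m) S ∧ S.ncard = gamma2t (K n □ K m) :=
  exists_totalTwoDom_ncard_eq_gamma2t
    (totalTwoDom_twoColumns hn (c₀ := ⟨0, by omega⟩) (c₁ := ⟨1, by omega⟩) (by simp))

variable {S : Set (Fin n × Fin m)}

lemma two_mul_le_ncard_of_row_empty (hS : TotalTwoDom (K n □ K m) S) {i : Fin n}
    (hi : ∀ j, (i, j) ∉ S) : m * 2 ≤ S.ncard := by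
  simpa using card_mul_le_ncard_of_le_ncard_fiber Prod.snd fun j =>
    (hS (i, j)).trans <| Set.ncard_le_ncard (fun u ⟨huS, hu⟩ => ⟨huS, by
      rcases boxProd_K_adj.1 hu with ⟨-, h⟩ | ⟨-, rfl⟩
      exacts [h.symm, absurd huS (hi u.2)]⟩)

lemma two_mul_le_ncard_of_column_empty (hS : TotalTwoDom (K n □ K m) S) {j : Fin m}
    (hj : ∀ i, (i, j) ∉ S) : n * 2 ≤ S.ncard := by
  simpa using card_mul_le_ncard_of_le_ncard_fiber Prod.fst fun i =>
    (hS (i, j)).trans <| Set.ncard_le_ncard (fun u ⟨huS, hu⟩ => ⟨huS, by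
      rcases boxProd_K_adj.1 hu with ⟨-, rfl⟩ | ⟨-, h⟩
      exacts [absurd huS (hj u.1), h.symm]⟩)

lemma exists_row_pair (hS : TotalTwoDom (K n □ K m) S) (hcol : ∀ j, ∃ i, (i, j) ∈ S)
    (h : n < m * 3) : ∃ i a b, a ≠ b ∧ (i, a) ∈ S ∧ (i, b) ∈ S := by
  by_contra! hno
  have hrow (i : Fin n) : (S ∩ Prod.fst ⁻¹' {i}).ncard ≤ 1 := by
    refine (Set.ncard_le_one (Set.toFinite _)).2 fun u ⟨hu, hui⟩ w ⟨hw, hwi⟩ => ?_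
    obtain ⟨_, a⟩ := u
    obtain ⟨_, b⟩ := w
    simp only [Set.mem_preimage, Set.mem_singleton_iff] at hui hwi
    subst hui hwi
    by_contra hab
    exact hno _ a b (fun h => hab (h ▸ rfl)) hu hw
  -- with at most one element per row, an element's two neighbours in `S` lie in its column
  have hcol3 (j : Fin m) : 3 ≤ (S ∩ Prod.snd ⁻¹' {j}).ncard := by
    obtain ⟨i, hi⟩ := hcol j
    have hsub : insert (i, j) (S ∩ {u | (K n □ K m).Adj (i, j) u}) ⊆ S ∩ Prod.snd ⁻¹' {j} := by
      rintro u (rfl | ⟨huS, hu⟩)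
      · exact ⟨hi, rfl⟩
      · rcases boxProd_K_adj.1 hu with ⟨-, h⟩ | ⟨hne, rfl⟩
        exacts [⟨huS, h.symm⟩, absurd huS (hno _ _ _ hne hi)]
    have hnotMem : (i, j) ∉ S ∩ {u | (K n □ K m).Adj (i, j) u} := fun h => (K n □ K m).irrefl h.2
    calc 3 ≤ (insert (i, j) (S ∩ {u | (K n □ K m).Adj (i, j) u})).ncard := by
          rw [Set.ncard_insert_of_notMem hnotMem]
          exact Nat.succ_le_succ (hS (i, j))
      _ ≤ _ := Set.ncard_le_ncard hsub
  have hle := ncard_le_card_mul_of_ncard_fiber_le Prod.fst hrow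
  have hge := card_mul_le_ncard_of_le_ncard_fiber Prod.snd hcol3
  simp only [Fintype.card_fin] at hle hge
  omega

lemma gamma2t_le_ncard_add_of_row_pair {k : ℕ} (hkm : k ≤ m) {S : Set (Fin n × Fin k)}
    (hS : TotalTwoDom (K n □ K k) S) (hrow : ∀ i, ∃ j, (i, j) ∈ S) {r : Fin n} {a b : Fin k}
    (hab : a ≠ b) (ha : (r, a) ∈ S) (hb : (r, b) ∈ S) :
    gamma2t (K n □ K m) ≤ S.ncard + (m - k) := by
  set f := columnEmbedding n (Fin.castLEEmb hkm)
  set R : Set (Fin m) := (Set.range (Fin.castLE hkm))ᶜ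
  have hdom : TotalTwoDom (K n □ K m) (f '' S ∪ Prod.mk r '' R) := by
    rintro ⟨i, j⟩
    by_cases hj : j ∈ R
    · have hjc (c : Fin k) : j ≠ Fin.castLE hkm c := fun h => hj ⟨c, h.symm⟩
      by_cases hi : i = r
      · subst hi
        refine two_le_ncard_of_ne (a := f (i, a)) (b := f (i, b)) ⟨Or.inl ⟨_, ha, rfl⟩, ?_⟩
          ⟨Or.inl ⟨_, hb, rfl⟩, ?_⟩ (by simpa [f] using hab) <;> simp [f, hjc]
      · obtain ⟨c, hc⟩ := hrow i
        refine two_le_ncard_of_ne (a := (r, j)) (b := f (i, c)) ⟨Or.inr ⟨j, hj, rfl⟩, ?_⟩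
          ⟨Or.inl ⟨_, hc, rfl⟩, ?_⟩ (by simp [f, Ne.symm hi]) <;> simp [f, hi, hjc]
    · obtain ⟨j, rfl⟩ := not_not.1 hj
      exact (hS (i, j)).trans <| (ncard_neighbors_le_image f S (i, j)).trans <|
        Set.ncard_le_ncard (Set.inter_subset_inter_left _ Set.subset_union_left)
  calc gamma2t (K n □ K m) ≤ (f '' S ∪ Prod.mk r '' R).ncard := gamma2t_le_ncard hdom
    _ ≤ (f '' S).ncard + (Prod.mk r '' R).ncard := Set.ncard_union_le _ _
    _ = S.ncard + (m - k) := by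
      rw [Set.ncard_image_of_injective _ f.injective,
        Set.ncard_image_of_injective _ (Prod.mk_right_injective r), Set.ncard_compl,
        Set.ncard_range_of_injective (Fin.castLE_injective hkm)]
      simp

lemma two_le_ncard_of_three_in_row {T : Set (Fin n × Fin m)} {r : Fin n} {c₁ c₂ c₃ : Fin m}
    (h₁₂ : c₁ ≠ c₂) (h₁₃ : c₁ ≠ c₃) (h₂₃ : c₂ ≠ c₃)
    (h₁ : (r, c₁) ∈ T) (h₂ : (r, c₂) ∈ T) (h₃ : (r, c₃) ∈ T) (j : Fin m) :
    2 ≤ (T ∩ {u | (K n □ K m).Adj (r, j) u}).ncard := by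
  by_cases hj₁ : j = c₁
  · subst hj₁
    exact two_le_ncard_of_ne ⟨h₂, by simpa⟩ ⟨h₃, by simpa⟩ (by simpa)
  by_cases hj₂ : j = c₂
  · subst hj₂
    exact two_le_ncard_of_ne ⟨h₁, by simpa [eq_comm]⟩ ⟨h₃, by simpa⟩ (by simpa)
  · exact two_le_ncard_of_ne ⟨h₁, by simpa⟩ ⟨h₂, by simpa⟩ (by simpa)

lemma gamma2t_le_ncard_of_column_empty {S : Set (Fin n × Fin (m + 1))} {j₀ : Fin (m + 1)}
    (hj₀ : ∀ i, (i, j₀) ∉ S)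
    (hdom : ∀ v : Fin n × Fin (m + 1), v.2 ≠ j₀ →
      2 ≤ (S ∩ {u | (K n □ K (m + 1)).Adj v u}).ncard) :
    gamma2t (K n □ K m) ≤ S.ncard := by
  set f := columnEmbedding n (Fin.succAboveEmb j₀)
  have hrange : S ⊆ Set.range f := by
    rintro ⟨i, j⟩ hp
    obtain ⟨j', rfl⟩ := Fin.exists_succAbove_eq fun h : j = j₀ => hj₀ i (h ▸ hp)
    exact ⟨(i, j'), rfl⟩
  calc gamma2t (K n □ K m) ≤ (f ⁻¹' S).ncard :=
        gamma2t_le_ncard <| totalTwoDom_preimage f hrange fun v =>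
          hdom (f v) (Fin.succAbove_ne j₀ v.2)
    _ = S.ncard := Set.ncard_preimage_of_injective_subset_range f.injective hrange

lemma gamma2t_le_ncard_of_column_singleton (hm : 3 ≤ m) {S : Set (Fin n × Fin (m + 1))}
    (hS : TotalTwoDom (K n □ K (m + 1)) S) {j₀ : Fin (m + 1)} {e : Fin n × Fin (m + 1)}
    (he : S ∩ Prod.snd ⁻¹' {j₀} = {e}) : gamma2t (K n □ K m) ≤ S.ncard := by
  obtain ⟨r, j⟩ := e
  have hcol {p} (hp : p ∈ S) (hpj : p.2 = j₀) : p = (r, j) := by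
    have : p ∈ S ∩ Prod.snd ⁻¹' {j₀} := ⟨hp, hpj⟩
    rwa [he] at this
  obtain ⟨heS, rfl⟩ : (r, j) ∈ S ∧ j = j₀ := by
    have : (r, j) ∈ S ∩ Prod.snd ⁻¹' {j₀} := he ▸ rfl
    exact this
  -- alone in its column, `(r, j)` has both of its neighbours in `S` in row `r`
  have hnbr {u} (hu : u ∈ S ∩ {u | (K n □ K (m + 1)).Adj (r, j) u}) :
      u = (r, u.2) ∧ u.2 ≠ j := by
    rcases boxProd_K_adj.1 hu.2 with ⟨hr, hj⟩ | ⟨hj, rfl⟩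
    · exact absurd (congrArg Prod.fst (hcol hu.1 hj.symm)) (Ne.symm hr)
    · exact ⟨rfl, Ne.symm hj⟩
  obtain ⟨x, hx, y, hy, hxy⟩ := exists_ne_of_two_le_ncard (hS (r, j))
  obtain ⟨hxr, hxj⟩ := hnbr hx
  obtain ⟨hyr, hyj⟩ := hnbr hy
  have hxy₂ : x.2 ≠ y.2 := fun h => hxy (by rw [hxr, hyr, h])
  obtain ⟨c, -, hc⟩ := Finset.exists_mem_notMem_of_card_lt_card
    (s := {j, x.2, y.2}) (t := Finset.univ) <| by
      rw [Finset.card_univ, Fintype.card_fin]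
      exact (Finset.card_le_three).trans_lt (by omega)
  simp only [Finset.mem_insert, Finset.mem_singleton, not_or] at hc
  obtain ⟨hcj, hcx, hcy⟩ := hc
  set T := insert (r, c) (S \ {(r, j)})
  have hxT : (r, x.2) ∈ T := Or.inr ⟨hxr ▸ hx.1, by simpa using hxj⟩
  have hyT : (r, y.2) ∈ T := Or.inr ⟨hyr ▸ hy.1, by simpa using hyj⟩
  refine (gamma2t_le_ncard_of_column_empty (S := T) (j₀ := j) ?_ ?_).trans ?_
  · rintro i (h | ⟨hiS, hij⟩)
    · exact hcj (congrArg Prod.snd h).symm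
    · exact hij (hcol hiS rfl)
  · rintro ⟨i, j'⟩ hj'
    by_cases hi : i = r
    · subst hi
      exact two_le_ncard_of_three_in_row hxy₂ (Ne.symm hcx) (Ne.symm hcy) hxT hyT (Or.inl rfl) j'
    · refine (hS (i, j')).trans (Set.ncard_le_ncard fun u ⟨huS, hu⟩ => ⟨Or.inr ⟨huS, ?_⟩, hu⟩)
      rintro rfl
      rcases boxProd_K_adj.1 hu with ⟨-, h⟩ | ⟨-, h⟩
      exacts [hj' h, hi h]
  · have hpos : 0 < S.ncard := (Set.ncard_pos (Set.toFinite _)).2 ⟨_, heS⟩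
    have hT : T.ncard ≤ (S \ {(r, j)}).ncard + 1 := Set.ncard_insert_le _ _
    rw [Set.ncard_sdiff_singleton_of_mem heS] at hT
    omega

lemma gamma2t_le_gamma2t_succ (hn : 2 ≤ n) (hm : 3 ≤ m) (hnm : n ≤ m + 1) :
    gamma2t (K n □ K m) ≤ gamma2t (K n □ K (m + 1)) := by
  obtain ⟨S, hS, hScard⟩ := exists_totalTwoDom_ncard_eq_gamma2t_boxProd_K hn (by omega : 2 ≤ m + 1)
  rw [← hScard]
  by_cases hfull : ∀ j, 2 ≤ (S ∩ Prod.snd ⁻¹' {j}).ncard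
  · have hge := card_mul_le_ncard_of_le_ncard_fiber Prod.snd hfull
    have hle := gamma2t_le_two_mul hn (by omega : 2 ≤ m)
    simp only [Fintype.card_fin] at hge
    omega
  push Not at hfull
  obtain ⟨j₀, hj₀⟩ := hfull
  rcases (Set.ncard_le_one_iff_eq (Set.toFinite _)).1 (Nat.le_of_lt_succ hj₀) with hempty | ⟨e, he⟩
  · exact gamma2t_le_ncard_of_column_empty (fun i hi => hempty.subset ⟨hi, rfl⟩) fun v _ => hS v
  · exact gamma2t_le_ncard_of_column_singleton hm hS he

lemma gamma2t_le_gamma2t_of_le (hn : 3 ≤ n) (hnm : n ≤ m) :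
    gamma2t (K n □ K n) ≤ gamma2t (K n □ K m) := by
  induction m, hnm using Nat.le_induction with
  | base => exact le_rfl
  | succ m hnm ih => exact ih.trans (gamma2t_le_gamma2t_succ (by omega) (by omega) (by omega))

lemma gamma2t_le_gamma2t_add_sub (hn : 2 ≤ n) (hnm : n ≤ m) :
    gamma2t (K n □ K m) ≤ gamma2t (K n □ K n) + (m - n) := by
  obtain ⟨S, hS, hScard⟩ := exists_totalTwoDom_ncard_eq_gamma2t_boxProd_K hn hn
  rw [← hScard]
  by_cases hlarge : 2 * n ≤ S.ncard
  · exact (gamma2t_le_two_mul hn (by omega)).trans (by omega)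
  have hrow (i : Fin n) : ∃ j, (i, j) ∈ S := by
    by_contra! h
    have := two_mul_le_ncard_of_row_empty hS h
    omega
  have hcol (j : Fin n) : ∃ i, (i, j) ∈ S := by
    by_contra! h
    have := two_mul_le_ncard_of_column_empty hS h
    omega
  obtain ⟨r, a, b, hab, ha, hb⟩ := exists_row_pair hS hcol (by omega)
  exact gamma2t_le_ncard_add_of_row_pair hnm hS hrow hab ha hb

end Grid

theorem stmt_17 (n m : ℕ) (hn : 3 ≤ n) (hnm : n ≤ m) :
    gamma2t (K n □ K n) ≤ gamma2t (K n □ K m) ∧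
    gamma2t (K n □ K m) ≤ min (2 * n) (gamma2t (K n □ K n) + (m - n)) :=
  ⟨gamma2t_le_gamma2t_of_le hn hnm,
    le_min (gamma2t_le_two_mul (by omega) (by omega)) (gamma2t_le_gamma2t_add_sub (by omega) hnm)⟩
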